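/- Let G be a simple graph with a matching M, and let M' be a matching in G with |M'| > |M|. Then the symmetric difference M Δ M' contains an M-augmenting path. -/

import Mathlib

/-- `M` is a matching in the simple graph `G`. -/
def IsMatchingOn {V : Type*} (G : SimpleGraph V) (M : Finset (Sym2 V)) : Prop :=
  (∀ e ∈ M, e ∈ G.edgeSet) ∧
  ∀ e ∈ M, ∀ f ∈ M, e ≠ f → ∀ v : V, v ∈ e → v ∉ f

/-- `p` is an `M`-augmenting path. -/
def IsAugPath {V : Type*} (G : SimpleGraph V) (M : Finset (Sym2 V)) {u v : V}
    (p : G.Walk u v) : Prop :=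
  p.IsPath ∧ Odd p.edges.length ∧
  (∀ e ∈ M, u ∉ e) ∧ (∀ e ∈ M, v ∉ e) ∧
  ∀ i : ℕ, ∀ hi : i < p.edges.length, (p.edges.get ⟨i, hi⟩ ∈ M ↔ Odd i)

/-!
Induction on `#(M' \ M)`. Counting vertices, some edge `uw ∈ M'` has an `M`-unsaturated end `u`.
If `w` is unsaturated too, `uw` alone is augmenting. Otherwise `w` is matched by `wx ∈ M`, and
`N = M - wx + uw` is a matching of the same size as `M` with `#(M' \ N) < #(M' \ M)`. An
`N`-augmenting path `p` in `N ∆ M'` avoids `u` and `w`, since `uw` lies in both `N` and `M'`.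
Hence `p` is `M`-augmenting unless it ends at `x`, the one vertex saturated by `M` but not by `N`;
then `u, w, x` followed by `p` is.
-/

open SimpleGraph Finset
open scoped symmDiff

namespace Finset

variable {α : Type*} [DecidableEq α] {s t : Finset α} {a b : α}

theorem card_insert_erase_of_mem (hb : b ∈ s) (ha : a ∉ s) : #(insert a (s.erase b)) = #s := by
  rw [card_insert_of_notMem fun h => ha (mem_of_mem_erase h), card_erase_add_one hb]

theorem card_sdiff_insert_erase_lt (hat : a ∈ t) (has : a ∉ s) (hb : b ∉ t) :
    #(t \ insert a (s.erase b)) < #(t \ s) := by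
  refine card_lt_card ⟨fun c hc => ?_, fun hsub => ?_⟩
  · simp only [mem_sdiff, mem_insert, mem_erase, not_or, not_and] at hc ⊢
    exact ⟨hc.1, fun hcs => hc.2.2 (by rintro rfl; exact hb hc.1) hcs⟩
  · simpa using (mem_sdiff.mp (hsub (mem_sdiff.mpr ⟨hat, has⟩))).2

theorem insert_erase_symmDiff (ha : a ∈ t) (hb : b ∉ t) :
    insert a (s.erase b) ∆ t = ((s ∆ t).erase a).erase b := by
  have hba : b ≠ a := by rintro rfl; exact hb ha
  ext c
  by_cases hca : c = a
  · subst hca; simp [mem_symmDiff, ha, hba.symm]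
  by_cases hcb : c = b
  · subst hcb; simp [mem_symmDiff, hb, hba]
  simp [mem_symmDiff, hca, hcb]

end Finset

section Berge

variable {V : Type*} {G : SimpleGraph V}

def Alternates (M : Finset (Sym2 V)) (l : List (Sym2 V)) : Prop :=
  ∀ i (hi : i < l.length), l.get ⟨i, hi⟩ ∈ M ↔ Odd i

namespace Alternates

variable {M N : Finset (Sym2 V)} {l : List (Sym2 V)}

theorem singleton {e : Sym2 V} (he : e ∉ M) : Alternates M [e] := by
  intro i hi
  obtain rfl : i = 0 := by simpa using hi
  simpa using he

theorem cons_cons {e f : Sym2 V} (h : Alternates M l) (he : e ∉ M) (hf : f ∈ M) :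
    Alternates M (e :: f :: l) := by
  rintro (_ | _ | i) hi
  · simpa using he
  · simpa using hf
  · simpa [Nat.odd_add_one, parity_simps] using h i (by simpa using hi)

theorem reverse (h : Alternates M l) (hl : Odd l.length) : Alternates M l.reverse := by
  intro i hi
  obtain ⟨k, hk⟩ := hl
  have hi' : i < l.length := by simpa using hi
  have hmirror := h (2 * k - i) (by omega)
  simp only [List.get_eq_getElem, List.getElem_reverse] at hmirror ⊢
  simp only [show l.length - 1 - i = 2 * k - i by omega, hmirror]
  constructor <;> rintro ⟨t, ht⟩ <;> exact ⟨k - t - 1, by omega⟩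

theorem congr (h : Alternates N l) (hMN : ∀ e ∈ l, e ∈ M ↔ e ∈ N) : Alternates M l :=
  fun i hi => (hMN _ (List.get_mem _ _)).trans (h i hi)

end Alternates

theorem IsAugPath.alternates {M : Finset (Sym2 V)} {u v : V} {p : G.Walk u v}
    (hp : IsAugPath G M p) : Alternates M p.edges :=
  hp.2.2.2.2

theorem IsAugPath.not_nil {M : Finset (Sym2 V)} {u v : V} {p : G.Walk u v}
    (hp : IsAugPath G M p) : ¬ p.Nil := by
  rw [Walk.not_nil_iff_lt_length, ← Walk.length_edges]
  exact hp.2.1.pos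

theorem IsAugPath.reverse {M : Finset (Sym2 V)} {u v : V} {p : G.Walk u v}
    (hp : IsAugPath G M p) : IsAugPath G M p.reverse := by
  obtain ⟨hpath, hodd, hu, hv, halt⟩ := hp
  refine ⟨hpath.reverse, by simpa using hodd, hv, hu, ?_⟩
  change Alternates M p.reverse.edges
  rw [Walk.edges_reverse]
  exact Alternates.reverse halt hodd

theorem isAugPath_cons_nil {M : Finset (Sym2 V)} {u w : V} (huw : G.Adj u w)
    (hu : ∀ e ∈ M, u ∉ e) (hw : ∀ e ∈ M, w ∉ e) : IsAugPath G M (Walk.cons huw Walk.nil) :=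
  ⟨by simp [huw.ne], by simp, hu, hw,
    Alternates.singleton fun h => hu _ h (Sym2.mem_mk_left u w)⟩

theorem isAugPath_cons_cons {M : Finset (Sym2 V)} {u w x c : V} (huw : G.Adj u w)
    (hwx : G.Adj w x) {q : G.Walk x c} (hq : q.IsPath) (hodd : Odd q.edges.length)
    (halt : Alternates M q.edges) (hu : ∀ e ∈ M, u ∉ e) (hc : ∀ e ∈ M, c ∉ e)
    (hwxM : s(w, x) ∈ M) (huq : u ∉ q.support) (hwq : w ∉ q.support) :
    IsAugPath G M (Walk.cons huw (Walk.cons hwx q)) :=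
  ⟨(hq.cons hwq).cons (by simp [huw.ne, huq]), by simpa [Nat.odd_add_one] using hodd, hu, hc,
    halt.cons_cons (fun h => hu _ h (Sym2.mem_mk_left u w)) hwxM⟩

namespace IsMatchingOn

variable [DecidableEq V] {M M' : Finset (Sym2 V)}

theorem card_biUnion_toFinset (hM : IsMatchingOn G M) :
    #(M.biUnion Sym2.toFinset) = 2 * #M := by
  rw [card_biUnion, sum_congr rfl fun e he =>
    Sym2.card_toFinset_of_not_isDiag e (G.not_isDiag_of_mem_edgeSet (hM.1 e he)),
    sum_const, smul_eq_mul, mul_comm]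
  intro e he f hf hef
  rw [Function.onFun, Finset.disjoint_left]
  exact fun v hve hvf =>
    hM.2 e he f hf hef v (Sym2.mem_toFinset.mp hve) (Sym2.mem_toFinset.mp hvf)

theorem exists_unsaturated_of_card_lt (hM : IsMatchingOn G M) (hM' : IsMatchingOn G M')
    (hcard : #M < #M') : ∃ u w, s(u, w) ∈ M' ∧ ∀ e ∈ M, u ∉ e := by
  by_contra! hsat
  have hsub : M'.biUnion Sym2.toFinset ⊆ M.biUnion Sym2.toFinset := by
    simp only [subset_iff, mem_biUnion, Sym2.mem_toFinset]
    rintro v ⟨e', he', hve'⟩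
    obtain ⟨w, rfl⟩ := Sym2.mem_iff_exists.mp hve'
    exact hsat v w he'
  have := card_le_card hsub
  rw [hM.card_biUnion_toFinset, hM'.card_biUnion_toFinset] at this
  omega

theorem insert_erase (hM : IsMatchingOn G M) {e f : Sym2 V} (he : e ∈ G.edgeSet)
    (hfree : ∀ g ∈ M, g ≠ f → ∀ v ∈ e, v ∉ g) : IsMatchingOn G (insert e (M.erase f)) := by
  refine ⟨fun g hg => ?_, fun g hg h hh hgh v hvg hvh => ?_⟩
  · rcases mem_insert.mp hg with rfl | hg
    · exact he
    · exact hM.1 g (mem_of_mem_erase hg)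
  rcases mem_insert.mp hg with rfl | hg' <;> rcases mem_insert.mp hh with rfl | hh'
  · exact hgh rfl
  · exact hfree h (mem_of_mem_erase hh') (ne_of_mem_erase hh') v hvg hvh
  · exact hfree g (mem_of_mem_erase hg') (ne_of_mem_erase hg') v hvh hvg
  · exact hM.2 g (mem_of_mem_erase hg') h (mem_of_mem_erase hh') hgh v hvg hvh

theorem notMem_support_of_mem_inter (hM : IsMatchingOn G M) (hM' : IsMatchingOn G M')
    {e : Sym2 V} (heM : e ∈ M) (heM' : e ∈ M') {v : V} (hv : v ∈ e) {a b : V}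
    {p : G.Walk a b} (hp : ¬ p.Nil) (hpΔ : ∀ g ∈ p.edges, g ∈ M ∆ M') : v ∉ p.support := by
  intro hvp
  obtain ⟨g, hg, hvg⟩ := (Walk.mem_support_iff_exists_mem_edges_of_not_nil hp).mp hvp
  rcases mem_symmDiff.mp (hpΔ g hg) with ⟨hgM, hgM'⟩ | ⟨hgM', hgM⟩
  · exact hM.2 e heM g hgM (by rintro rfl; exact hgM' heM') v hv hvg
  · exact hM'.2 e heM' g hgM' (by rintro rfl; exact hgM heM) v hv hvg

end IsMatchingOn

section Swap

variable [DecidableEq V] {M M' : Finset (Sym2 V)} {e f : Sym2 V}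

theorem notMem_of_forall_notMem_insert_erase {v : V}
    (hv : ∀ g ∈ insert e (M.erase f), v ∉ g) (hvf : v ∉ f) : ∀ g ∈ M, v ∉ g := by
  intro g hg hvg
  have hgf : g ≠ f := by rintro rfl; exact hvf hvg
  exact hv g (mem_insert_of_mem (mem_erase.mpr ⟨hgf, hg⟩)) hvg

variable {u w x : V}

theorem exists_isAugPath_cons_cons_of_insert_erase (hM : IsMatchingOn G M)
    (hM' : IsMatchingOn G M') (hu : ∀ e ∈ M, u ∉ e) (huw : s(u, w) ∈ M') (hwx : s(w, x) ∈ M)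
    (hwx' : s(w, x) ∉ M') (hN : IsMatchingOn G (insert s(u, w) (M.erase s(w, x))))
    {c : V} {q : G.Walk x c} (hq : IsAugPath G (insert s(u, w) (M.erase s(w, x))) q)
    (hqΔ : ∀ e ∈ q.edges, e ∈ insert s(u, w) (M.erase s(w, x)) ∆ M') :
    ∃ (c d : V) (q : G.Walk c d), IsAugPath G M q ∧ ∀ e ∈ q.edges, e ∈ M ∆ M' := by
  have huwM : s(u, w) ∉ M := fun h => hu _ h (Sym2.mem_mk_left u w)
  have hedges : ∀ g ∈ q.edges, g ≠ s(w, x) ∧ g ≠ s(u, w) ∧ g ∈ M ∆ M' := by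
    simpa only [insert_erase_symmDiff huw hwx', mem_erase] using hqΔ
  have huq := hN.notMem_support_of_mem_inter hM' (mem_insert_self _ _) huw
    (Sym2.mem_mk_left u w) hq.not_nil hqΔ
  have hwq := hN.notMem_support_of_mem_inter hM' (mem_insert_self _ _) huw
    (Sym2.mem_mk_right u w) hq.not_nil hqΔ
  have hcw : c ≠ w := fun h => hwq (h ▸ q.end_mem_support)
  have hcx : c ≠ x := by
    rintro rfl
    exact hq.not_nil (Walk.isPath_iff_nil.mp hq.1)
  have huw' : G.Adj u w := hM'.1 _ huw
  have hwx'' : G.Adj w x := hM.1 _ hwx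
  refine ⟨u, c, .cons huw' (.cons hwx'' q), ?_, ?_⟩
  · refine isAugPath_cons_cons huw' hwx'' hq.1 hq.2.1 ?_ hu ?_ hwx huq hwq
    · refine hq.alternates.congr fun g hg => ?_
      simp [(hedges g hg).1, (hedges g hg).2.1]
    · exact notMem_of_forall_notMem_insert_erase hq.2.2.2.1 (by simp [hcw, hcx])
  · simp only [Walk.edges_cons, List.mem_cons]
    rintro g (rfl | rfl | hg)
    · exact mem_symmDiff.mpr (.inr ⟨huw, huwM⟩)
    · exact mem_symmDiff.mpr (.inl ⟨hwx, hwx'⟩)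
    · exact (hedges g hg).2.2

theorem exists_isAugPath_of_insert_erase (hM : IsMatchingOn G M) (hM' : IsMatchingOn G M')
    (hu : ∀ e ∈ M, u ∉ e) (huw : s(u, w) ∈ M') (hwx : s(w, x) ∈ M) (hwx' : s(w, x) ∉ M')
    (hN : IsMatchingOn G (insert s(u, w) (M.erase s(w, x)))) {a b : V} {p : G.Walk a b}
    (hp : IsAugPath G (insert s(u, w) (M.erase s(w, x))) p)
    (hpΔ : ∀ e ∈ p.edges, e ∈ insert s(u, w) (M.erase s(w, x)) ∆ M') :
    ∃ (c d : V) (q : G.Walk c d), IsAugPath G M q ∧ ∀ e ∈ q.edges, e ∈ M ∆ M' := by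
  by_cases hxa : a = x
  · subst hxa
    exact exists_isAugPath_cons_cons_of_insert_erase hM hM' hu huw hwx hwx' hN hp hpΔ
  by_cases hxb : b = x
  · subst hxb
    exact exists_isAugPath_cons_cons_of_insert_erase hM hM' hu huw hwx hwx' hN hp.reverse
      (by simpa using hpΔ)
  have hedges : ∀ g ∈ p.edges, g ≠ s(w, x) ∧ g ≠ s(u, w) ∧ g ∈ M ∆ M' := by
    simpa only [insert_erase_symmDiff huw hwx', mem_erase] using hpΔ
  have hwp := hN.notMem_support_of_mem_inter hM' (mem_insert_self _ _) huw
    (Sym2.mem_mk_right u w) hp.not_nil hpΔ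
  have haw : a ≠ w := fun h => hwp (h ▸ p.start_mem_support)
  have hbw : b ≠ w := fun h => hwp (h ▸ p.end_mem_support)
  refine ⟨a, b, p, ⟨hp.1, hp.2.1, ?_, ?_, ?_⟩, fun g hg => (hedges g hg).2.2⟩
  · exact notMem_of_forall_notMem_insert_erase hp.2.2.1 (by simp [haw, hxa])
  · exact notMem_of_forall_notMem_insert_erase hp.2.2.2.1 (by simp [hbw, hxb])
  · exact hp.alternates.congr fun g hg => by simp [(hedges g hg).1, (hedges g hg).2.1]

end Swap

end Berge

/-- If `M'` is a matching larger than the matching `M`, then the symmetric difference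
`M Δ M'` contains an `M`-augmenting path. -/
theorem stmt4 {V : Type*} [DecidableEq V] (G : SimpleGraph V) (M M' : Finset (Sym2 V))
    (hM : IsMatchingOn G M) (hM' : IsMatchingOn G M') (hcard : M.card < M'.card) :
    ∃ (u v : V) (p : G.Walk u v), IsAugPath G M p ∧
      ∀ e ∈ p.edges, e ∈ (M \ M') ∪ (M' \ M) := by
  induction hk : #(M' \ M) using Nat.strong_induction_on generalizing M with
  | _ k ih =>
  obtain ⟨u, w, huw, hu⟩ := hM.exists_unsaturated_of_card_lt hM' hcard
  have huwM : s(u, w) ∉ M := fun h => hu _ h (Sym2.mem_mk_left u w)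
  by_cases hw : ∀ e ∈ M, w ∉ e
  · have huw' : G.Adj u w := hM'.1 _ huw
    refine ⟨u, w, .cons huw' .nil, isAugPath_cons_nil huw' hu hw, ?_⟩
    simp [huw, huwM]
  push Not at hw
  obtain ⟨f, hf, hwf⟩ := hw
  obtain ⟨x, rfl⟩ := Sym2.mem_iff_exists.mp hwf
  have hwx' : s(w, x) ∉ M' := fun h => hM'.2 _ huw _ h (fun h => huwM (h ▸ hf)) w
    (Sym2.mem_mk_right u w) (Sym2.mem_mk_left w x)
  have hN := hM.insert_erase (hM'.1 _ huw) fun g hg hgf v hv hvg => by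
    rcases Sym2.mem_iff.mp hv with rfl | rfl
    · exact hu g hg hvg
    · exact hM.2 _ hf g hg (Ne.symm hgf) v (Sym2.mem_mk_left v x) hvg
  obtain ⟨a, b, p, hp, hpΔ⟩ := ih _ (hk ▸ card_sdiff_insert_erase_lt huw huwM hwx') _ hN
    (by rwa [card_insert_erase_of_mem hf huwM]) rfl
  exact exists_isAugPath_of_insert_erase hM hM' hu huw hf hwx' hN hp hpΔ
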